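/- arXiv:1611.08825 — 6 statements merged into one kernel-verified Lean document; each statement's English description precedes it below -/
import Mathlib

section
/- Let A : Fin N → Matrix (Fin 2) (Fin 2) ℝ be a finite family of real 2×2 matrices. Then there exists an invertible matrix T ∈ Matrix (Fin 2) (Fin 2) ℝ such that (T * A i * T⁻¹) 1 0 = 0 for every i : Fin N (i.e. all the matrices are simultaneously upper triangularizable) if and only if the matrices have a common eigenvector, i.e. there exists v ∈ (Fin 2 → ℝ) with v ≠ 0 such that for every i : Fin N there exists μ ∈ ℝ with (A i).mulVec v = μ • v. -/
/-!
A matrix `M` has `M 1 0 = 0` exactly when `e₀` is an eigenvector of `M`, and `T * A * T⁻¹` has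
eigenvector `w` exactly when `A` has eigenvector `T⁻¹ w`. So triangularizing by `T` means that
`T⁻¹ e₀` is a common eigenvector. Conversely, invertible matrices act transitively on nonzero
vectors, so a common eigenvector is `S e₀` for some invertible `S`, and `T = S⁻¹` works.
-/

open Matrix

theorem LinearEquiv.exists_apply_eq_of_ne_zero {K V : Type*} [DivisionRing K] [AddCommGroup V]
    [Module K V] {u v : V} (hu : u ≠ 0) (hv : v ≠ 0) : ∃ g : V ≃ₗ[K] V, g u = v := by
  let f := (toSpanNonzeroSingleton K V u hu).symm ≪≫ₗ toSpanNonzeroSingleton K V v hv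
  obtain ⟨g, hg⟩ := Submodule.exists_linearEquiv_restrict_eq f
  have hfu : f ⟨u, Submodule.mem_span_singleton_self u⟩ =
      ⟨v, Submodule.mem_span_singleton_self v⟩ := by
    have hu1 : (toSpanNonzeroSingleton K V u hu).symm ⟨u, _⟩ = 1 :=
      (symm_apply_eq _).mpr (toSpanNonzeroSingleton_one K V u hu).symm
    simp [f, hu1]
  exact ⟨g, by simpa [hfu] using (hg ⟨u, Submodule.mem_span_singleton_self u⟩).symm⟩

theorem Matrix.exists_isUnit_mulVec_eq_of_ne_zero {K n : Type*} [Field K] [Fintype n]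
    [DecidableEq n] {u v : n → K} (hu : u ≠ 0) (hv : v ≠ 0) :
    ∃ S : Matrix n n K, IsUnit S ∧ S *ᵥ u = v := by
  obtain ⟨g, hg⟩ := LinearEquiv.exists_apply_eq_of_ne_zero (K := K) hu hv
  refine ⟨LinearMap.toMatrix' g.toLinearMap, ?_, by simpa [LinearMap.toMatrix'_mulVec] using hg⟩
  exact LinearMap.isUnit_toMatrix'_iff.mpr ((Module.End.isUnit_iff _).mpr g.bijective)

theorem Matrix.conj_mulVec_eq_smul_iff {R n : Type*} [CommRing R] [Fintype n] [DecidableEq n]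
    {T : Matrix n n R} (hT : IsUnit T) (A : Matrix n n R) (v : n → R) (μ : R) :
    (T * A * T⁻¹) *ᵥ v = μ • v ↔ A *ᵥ (T⁻¹ *ᵥ v) = μ • (T⁻¹ *ᵥ v) := by
  have hTd : IsUnit T.det := (isUnit_iff_isUnit_det T).mp hT
  rw [← mulVec_mulVec, ← mulVec_mulVec]
  constructor
  · intro h
    rw [← mulVec_smul, ← h, mulVec_mulVec _ T⁻¹ T, nonsing_inv_mul T hTd, one_mulVec]
  · intro h
    rw [h, mulVec_smul, mulVec_mulVec _ T T⁻¹, mul_nonsing_inv T hTd, one_mulVec]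

theorem Matrix.apply_one_zero_eq_zero_iff_exists_mulVec_single_zero_eq_smul {R : Type*} [Semiring R]
    (M : Matrix (Fin 2) (Fin 2) R) :
    M 1 0 = 0 ↔ ∃ μ : R, M *ᵥ Pi.single 0 1 = μ • Pi.single 0 1 := by
  rw [mulVec_single_one]
  constructor
  · intro h
    refine ⟨M 0 0, funext fun i => ?_⟩
    fin_cases i <;> simp [h]
  · rintro ⟨μ, hμ⟩
    simpa using congrFun hμ 1

theorem two_by_two_simultaneous_triangularization_iff_common_eigenvector
    (N : ℕ) (A : Fin N → Matrix (Fin 2) (Fin 2) ℝ) :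
    (∃ T : Matrix (Fin 2) (Fin 2) ℝ, IsUnit T ∧
      ∀ i : Fin N, (T * A i * T⁻¹) 1 0 = 0) ↔
    (∃ v : Fin 2 → ℝ, v ≠ 0 ∧
      ∀ i : Fin N, ∃ μ : ℝ, (A i).mulVec v = μ • v) := by
  have he₀ : (Pi.single 0 1 : Fin 2 → ℝ) ≠ 0 := by simp
  constructor
  · rintro ⟨T, hT, htri⟩
    have hTinv : Function.Injective (T⁻¹ *ᵥ ·) :=
      mulVec_injective_iff_isUnit.mpr (isUnit_nonsing_inv_iff.mpr hT)
    refine ⟨T⁻¹ *ᵥ Pi.single 0 1, (hTinv.ne_iff' (mulVec_zero _)).mpr he₀, fun i => ?_⟩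
    obtain ⟨μ, hμ⟩ :=
      (apply_one_zero_eq_zero_iff_exists_mulVec_single_zero_eq_smul _).mp (htri i)
    exact ⟨μ, (conj_mulVec_eq_smul_iff hT _ _ _).mp hμ⟩
  · rintro ⟨v, hv, hev⟩
    obtain ⟨S, hS, hSe⟩ := exists_isUnit_mulVec_eq_of_ne_zero he₀ hv
    have hSinv : IsUnit S⁻¹ := isUnit_nonsing_inv_iff.mpr hS
    refine ⟨S⁻¹, hSinv, fun i => ?_⟩
    obtain ⟨μ, hμ⟩ := hev i
    rw [apply_one_zero_eq_zero_iff_exists_mulVec_single_zero_eq_smul]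
    refine ⟨μ, (conj_mulVec_eq_smul_iff hSinv _ _ _).mpr ?_⟩
    rwa [nonsing_inv_nonsing_inv S ((isUnit_iff_isUnit_det S).mp hS), hSe]
end

section
/- Let n ≥ 1, let A : Fin N → Matrix (Fin n) (Fin n) ℝ be a finite family of real n×n matrices, and let 1 ≤ r < n. Then the family is simultaneously block triangularizable with dimension r if and only if there exists a matrix J ∈ Matrix (Fin n) (Fin r) ℝ of full column rank (J.rank = r) such that for every i : Fin N the n×2r matrix [J (A i) * J], formed by placing the columns of J followed by the columns of (A i) * J (Matrix.fromColumns J ((A i) * J)), has rank r. -/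
/-!
Both conditions say that the family has a common invariant subspace of dimension `r`. The lower
left block of `T * A i * T⁻¹` vanishes exactly when `A i` maps the span of the first `r` columns
of `T⁻¹` into itself, and every `r` linearly independent columns can be completed to an invertible
matrix. On the other side, `rank [J  A J] = rank J` says that the columns of `A J` lie in the
column space of `J`.
-/

open Matrix

namespace Matrix

variable {K R m ι κ : Type*}

section CommSemiring

variable [CommSemiring R] [Fintype ι]

theorem range_mulVecLin_fromCols [Fintype κ] (J : Matrix m ι R) (B : Matrix m κ R) :
    LinearMap.range (fromCols J B).mulVecLin =
      LinearMap.range J.mulVecLin ⊔ LinearMap.range B.mulVecLin := by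
  have hcol : (fromCols J B).col = Sum.elim J.col B.col := by
    ext (q | q) x <;> rfl
  rw [range_mulVecLin, range_mulVecLin, range_mulVecLin, hcol, Set.Sum.elim_range,
    Submodule.span_union]

theorem range_mulVecLin_le_iff_exists_eq_mul [Fintype κ] (J : Matrix m ι R) (B : Matrix m κ R) :
    LinearMap.range B.mulVecLin ≤ LinearMap.range J.mulVecLin ↔
      ∃ C : Matrix ι κ R, B = J * C := by
  refine ⟨fun h => ?_, ?_⟩
  · have hcol : ∀ q, ∃ c, J *ᵥ c = B.col q := fun q =>
      h (by rw [range_mulVecLin]; exact Submodule.subset_span ⟨q, rfl⟩)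
    choose c hc using hcol
    refine ⟨of fun k q => c q k, ?_⟩
    ext x q
    rw [← col_apply B, ← hc]
    rfl
  · rintro ⟨C, rfl⟩
    rw [mulVecLin_mul, LinearMap.range_comp]
    exact LinearMap.map_le_range

theorem exists_mul_submatrix_one_eq_iff [Fintype m] [DecidableEq m] (M : Matrix m m R)
    (e : ι ⊕ κ ≃ m) :
    (∃ C : Matrix ι ι R, M * (1 : Matrix m m R).submatrix id (e ∘ Sum.inl) =
        (1 : Matrix m m R).submatrix id (e ∘ Sum.inl) * C) ↔
      ∀ p q, M (e (Sum.inr p)) (e (Sum.inl q)) = 0 := by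
  rw [show M * (1 : Matrix m m R).submatrix id (e ∘ Sum.inl) = M.submatrix id (e ∘ Sum.inl) from
    mul_submatrix_one (Equiv.refl m) _ M]
  classical
  constructor
  · rintro ⟨C, hC⟩ p q
    simpa [mul_apply, one_apply] using congr_fun₂ hC (e (Sum.inr p)) q
  · intro h
    refine ⟨M.submatrix (e ∘ Sum.inl) (e ∘ Sum.inl), ?_⟩
    ext x q
    obtain ⟨k | k, rfl⟩ := e.surjective x <;> simp [mul_apply, one_apply, h, Finset.sum_ite_eq]

end CommSemiring

section Field

variable [Field K] [Fintype ι]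

theorem rank_fromCols_eq_rank_iff [Fintype m] [Fintype κ] (J : Matrix m ι K)
    (B : Matrix m κ K) :
    (fromCols J B).rank = J.rank ↔
      LinearMap.range B.mulVecLin ≤ LinearMap.range J.mulVecLin := by
  rw [rank, rank, range_mulVecLin_fromCols, ← sup_eq_left]
  exact ⟨fun h => (Submodule.eq_of_le_of_finrank_eq le_sup_left h.symm).symm, fun h => by rw [h]⟩

theorem rank_eq_card_iff_linearIndependent_col (J : Matrix m ι K) :
    J.rank = Fintype.card ι ↔ LinearIndependent K J.col := by
  rw [linearIndependent_iff_card_eq_finrank_span, rank_eq_finrank_span_cols, eq_comm]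
  rfl

theorem rank_submatrix_id_of_isUnit [Fintype m] [DecidableEq m] {P : Matrix m m K} (hP : IsUnit P)
    {f : ι → m} (hf : Function.Injective f) : (P.submatrix id f).rank = Fintype.card ι :=
  (rank_eq_card_iff_linearIndependent_col _).2 <|
    (linearIndependent_cols_iff_isUnit.2 hP).comp f hf

theorem exists_isUnit_submatrix_eq [Fintype m] [DecidableEq m] [Fintype κ] (J : Matrix m ι K)
    (hJ : LinearIndependent K J.col) (e : ι ⊕ κ ≃ m) :
    ∃ P : Matrix m m K, IsUnit P ∧ P.submatrix id (e ∘ Sum.inl) = J := by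
  obtain ⟨W, hW⟩ := (Submodule.span K (Set.range J.col)).exists_isCompl
  have hWrank : Module.finrank K W = Fintype.card κ := by
    have := Submodule.finrank_add_eq_of_isCompl hW
    rw [finrank_span_eq_card hJ, Module.finrank_fintype_fun_eq_card, ← Fintype.card_congr e,
      Fintype.card_sum] at this
    omega
  let bW : Module.Basis κ K W :=
    (Module.finBasis K W).reindex (Fintype.equivOfCardEq (by simp [hWrank]))
  have hbW : LinearIndependent K (W.subtype ∘ bW) :=
    bW.linearIndependent.map' W.subtype (Submodule.ker_subtype W)
  have hspan : Submodule.span K (Set.range (W.subtype ∘ bW)) ≤ W :=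
    Submodule.span_le.2 (by rintro _ ⟨k, rfl⟩; exact (bW k).2)
  have hv : LinearIndependent K (Sum.elim J.col (W.subtype ∘ bW)) :=
    hJ.sum_type hbW (hW.disjoint.mono_right hspan)
  refine ⟨of fun x y => Sum.elim J.col (W.subtype ∘ bW) (e.symm y) x, ?_, ?_⟩
  · exact linearIndependent_cols_iff_isUnit.1 (hv.comp e.symm e.symm.injective)
  · ext x q
    simp

theorem rank_fromCols_mul_eq_card_iff [Fintype m] [DecidableEq m] {P : Matrix m m K}
    (hP : IsUnit P) (e : ι ⊕ κ ≃ m) (A : Matrix m m K) :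
    (fromCols (P.submatrix id (e ∘ Sum.inl)) (A * P.submatrix id (e ∘ Sum.inl))).rank =
        Fintype.card ι ↔
      ∀ p q, (P⁻¹ * A * P) (e (Sum.inr p)) (e (Sum.inl q)) = 0 := by
  have := hP.invertible
  have hJ : P.submatrix id (e ∘ Sum.inl) = P * (1 : Matrix m m K).submatrix id (e ∘ Sum.inl) :=
    (mul_submatrix_one (Equiv.refl m) _ P).symm
  rw [← rank_submatrix_id_of_isUnit hP (e.injective.comp Sum.inl_injective),
    rank_fromCols_eq_rank_iff, range_mulVecLin_le_iff_exists_eq_mul,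
    ← exists_mul_submatrix_one_eq_iff, hJ]
  refine exists_congr fun C => ?_
  rw [Matrix.mul_assoc (P⁻¹ * A), Matrix.mul_assoc P⁻¹, inv_mul_eq_iff_eq_mul_of_invertible,
    Matrix.mul_assoc P]

end Field

end Matrix

theorem simultaneous_block_triangularization_iff_rank_condition
    (n r N : ℕ) (hrn : r < n)
    (A : Fin N → Matrix (Fin n) (Fin n) ℝ) :
    (∃ T : Matrix (Fin n) (Fin n) ℝ, IsUnit T ∧
      ∀ (i : Fin N) (p : Fin (n - r)) (q : Fin r),
        (T * A i * T⁻¹)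
          (Fin.cast (show r + (n - r) = n by omega) (finSumFinEquiv (Sum.inr p)))
          (Fin.cast (show r + (n - r) = n by omega) (finSumFinEquiv (Sum.inl q))) = 0) ↔
    (∃ J : Matrix (Fin n) (Fin r) ℝ, J.rank = r ∧
      ∀ i : Fin N, (Matrix.fromCols J ((A i) * J)).rank = r) := by
  let e : Fin r ⊕ Fin (n - r) ≃ Fin n := finSumFinEquiv.trans (finCongr (by omega))
  have he : Function.Injective (e ∘ Sum.inl) := e.injective.comp Sum.inl_injective
  constructor
  · rintro ⟨T, hT, hblock⟩
    have hP : IsUnit T⁻¹ := isUnit_nonsing_inv_iff.2 hT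
    refine ⟨T⁻¹.submatrix id (e ∘ Sum.inl), by simpa using rank_submatrix_id_of_isUnit hP he,
      fun i => ?_⟩
    simpa using (rank_fromCols_mul_eq_card_iff hP e (A i)).2 <| by
      rw [nonsing_inv_nonsing_inv T ((isUnit_iff_isUnit_det T).1 hT)]
      exact hblock i
  · rintro ⟨J, hJ, hAJ⟩
    obtain ⟨P, hP, rfl⟩ := exists_isUnit_submatrix_eq J
      ((rank_eq_card_iff_linearIndependent_col J).1 (by simpa using hJ)) e
    refine ⟨P⁻¹, isUnit_nonsing_inv_iff.2 hP, fun i => ?_⟩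
    rw [nonsing_inv_nonsing_inv P ((isUnit_iff_isUnit_det P).1 hP)]
    exact (rank_fromCols_mul_eq_card_iff hP e (A i)).1 (by simpa using hAJ i)
end

section
/- Let n ≥ 1, let M ∈ Matrix (Fin n) (Fin n) ℂ, let k ≥ 1, and let W be a submodule of (Fin n → ℂ) with finrank ℂ W = k. Then W is M-invariant (M.mulVec v ∈ W for every v ∈ W) if and only if W has a basis consisting of a union of Jordan chains of M; precisely, if and only if there exist vectors b : Fin k → (Fin n → ℂ) that are linearly independent with Submodule.span ℂ (Set.range b) = W, and scalars lam : Fin k → ℂ, such that M.mulVec (b 0) = lam 0 • b 0, and for every i : Fin k with 0 < i.val, either M.mulVec (b i) = lam i • b i, or (M.mulVec (b i) = lam i • b i + b (i−1) and lam i = lam (i−1)). -/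
/-!
Filippov's argument, by induction on `dim W`. Pick an eigenvalue `μ` of `f` on `W` and put
`g = f - μ`; then `U = g W` is a smaller invariant subspace, spanned by Jordan chains. Extend
each chain for `μ` by a `g`-preimage of its top vector, and add eigenvectors spanning a complement
of `U ⊓ ker g` in `W ⊓ ker g`. The new family spans `W`: `g` maps its span onto `U` (on a chain for
`ν ≠ μ`, `g = (f - ν) + (ν - μ)` is invertible), and the span contains `W ⊓ ker g`. It has
`dim U + #(chains for μ) + dim (W ⊓ ker g) - dim (U ⊓ ker g) ≤ dim W` members, as the bottoms of
the chains for `μ` are independent in `U ⊓ ker g`, so it is independent.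
-/

open Module Submodule Set

namespace Submodule

variable {K V : Type*} [Field K] [AddCommGroup V] [Module K V]

theorem finrank_map_add_finrank_inf_ker {V₂ : Type*} [AddCommGroup V₂] [Module K V₂]
    (g : V →ₗ[K] V₂) (W : Submodule K V) [FiniteDimensional K W] :
    finrank K (W.map g) + finrank K ↥(W ⊓ LinearMap.ker g) = finrank K W := by
  have := LinearMap.finrank_range_add_finrank_ker (g.domRestrict W)
  rwa [LinearMap.range_domRestrict, LinearMap.ker_domRestrict, ← finrank_map_subtype_eq,
    map_comap_subtype] at this

theorem exists_le_sup_eq_and_finrank_add_eq [FiniteDimensional K V]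
    {P Q : Submodule K V} (h : P ≤ Q) :
    ∃ C ≤ Q, P ⊔ C = Q ∧ finrank K P + finrank K C = finrank K Q := by
  obtain ⟨C, hC⟩ := P.exists_isCompl
  have hsup : P ⊔ C ⊓ Q = Q := by rw [← sup_inf_assoc_of_le C h, hC.sup_eq_top, top_inf_eq]
  have hinf : P ⊓ (C ⊓ Q) = ⊥ := hC.disjoint.mono_right inf_le_left |>.eq_bot
  refine ⟨C ⊓ Q, inf_le_right, hsup, ?_⟩
  rw [← finrank_sup_add_finrank_inf_eq, hsup, hinf, finrank_bot, add_zero]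

theorem eq_of_le_of_map_le_of_inf_ker_le {V₂ : Type*} [AddCommGroup V₂] [Module K V₂]
    (g : V →ₗ[K] V₂) {S W : Submodule K V} (hSW : S ≤ W) (hmap : W.map g ≤ S.map g)
    (hker : W ⊓ LinearMap.ker g ≤ S) : S = W := by
  refine le_antisymm hSW ?_
  calc W = (S ⊔ LinearMap.ker g) ⊓ W :=
        (inf_eq_right.2 ((LinearMap.map_le_map_iff g).1 hmap)).symm
    _ = S ⊔ W ⊓ LinearMap.ker g := by rw [sup_inf_assoc_of_le _ hSW, inf_comm]
    _ ≤ S := sup_le le_rfl hker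

end Submodule

theorem linearIndependent_of_span_eq_of_card_le {K V ι : Type*} [Field K] [AddCommGroup V]
    [Module K V] [Fintype ι] {b : ι → V} {W : Submodule K V} (hspan : span K (range b) = W)
    (hcard : Fintype.card ι ≤ finrank K W) : LinearIndependent K b := by
  rw [linearIndependent_iff_card_eq_finrank_span, Set.finrank, hspan]
  exact le_antisymm hcard (hspan ▸ finrank_range_le_card b)

namespace Module.End

variable {K V : Type*} [Field K] [AddCommGroup V] [Module K V]

theorem pow_sub_algebraMap_apply_mem {f : End K V} {W : Submodule K V}
    (hW : ∀ v ∈ W, f v ∈ W) (μ : K) (j : ℕ) {v : V} (hv : v ∈ W) :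
    ((f - algebraMap K (End K V) μ) ^ j) v ∈ W := by
  induction j with
  | zero => exact hv
  | succ j ih =>
    rw [pow_succ', mul_apply, LinearMap.sub_apply, algebraMap_end_apply]
    exact W.sub_mem (hW _ ih) (W.smul_mem μ ih)

theorem apply_mem_map_sub_algebraMap {f : End K V} {W : Submodule K V}
    (hW : ∀ v ∈ W, f v ∈ W) (μ : K) :
    ∀ u ∈ W.map (f - algebraMap K (End K V) μ), f u ∈ W.map (f - algebraMap K (End K V) μ) := by
  rintro _ ⟨w, hw, rfl⟩
  exact ⟨f w, hW w hw, by simp [map_sub, map_smul]⟩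

theorem exists_eigenvector_mem [IsAlgClosed K] [FiniteDimensional K V] {f : End K V}
    {W : Submodule K V} (hW : ∀ v ∈ W, f v ∈ W) (hW0 : W ≠ ⊥) :
    ∃ μ : K, ∃ v ∈ W, v ≠ 0 ∧ f v = μ • v := by
  have : Nontrivial W := nontrivial_iff_ne_bot.2 hW0
  obtain ⟨μ, hμ⟩ := exists_eigenvalue (f.restrict hW)
  obtain ⟨v, hv, hv0⟩ := hμ.exists_hasEigenvector
  refine ⟨μ, v, v.2, by simpa using hv0, ?_⟩
  simpa using congrArg Subtype.val (mem_eigenspace_iff.1 hv)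

theorem mem_map_sub_algebraMap_of_pow_apply_eq_zero {f : End K V} {μ ν : K} (hne : ν ≠ μ)
    {T : Submodule K V} {m : ℕ} {v : V} (hv : ((f - algebraMap K (End K V) ν) ^ m) v = 0)
    (hT : ∀ j, ((f - algebraMap K (End K V) ν) ^ j) v ∈ T) :
    v ∈ T.map (f - algebraMap K (End K V) μ) := by
  induction m generalizing v with
  | zero => simp_all
  | succ m ih =>
    set N := f - algebraMap K (End K V) ν
    have hNv : N v ∈ T.map (f - algebraMap K (End K V) μ) :=
      ih (by rwa [← mul_apply, ← pow_succ]) fun j => by rw [← mul_apply, ← pow_succ]; exact hT _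
    have hgv : (f - algebraMap K (End K V) μ) v ∈ T.map (f - algebraMap K (End K V) μ) :=
      mem_map_of_mem (by simpa using hT 0)
    have hsplit : v = (ν - μ)⁻¹ • ((f - algebraMap K (End K V) μ) v - N v) := by
      simp only [N, LinearMap.sub_apply, algebraMap_end_apply]
      rw [show f v - μ • v - (f v - ν • v) = (ν - μ) • v by module, smul_smul,
        inv_mul_cancel₀ (sub_ne_zero.2 hne), one_smul]
    rw [hsplit]
    exact smul_mem _ _ (sub_mem hgv hNv)

def IsJordanSeq (f : End K V) {k : ℕ} (b : Fin k → V) (lam : Fin k → K) : Prop :=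
  ∀ i : Fin k, f (b i) = lam i • b i ∨
    0 < i.val ∧ f (b i) = lam i • b i + b ⟨i - 1, by omega⟩ ∧ lam i = lam ⟨i - 1, by omega⟩

theorem IsJordanSeq.apply_mem_span {f : End K V} {k : ℕ} {b : Fin k → V} {lam : Fin k → K}
    (h : IsJordanSeq f b lam) {v : V} (hv : v ∈ span K (range b)) : f v ∈ span K (range b) := by
  suffices span K (range b) ≤ (span K (range b)).comap f from this hv
  refine span_le.2 (range_subset_iff.2 fun i => ?_)
  have hb : ∀ j, b j ∈ span K (range b) := fun j => subset_span (mem_range_self j)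
  rcases h i with h | ⟨-, h, -⟩ <;> rw [SetLike.mem_coe, mem_comap, h]
  · exact smul_mem _ _ (hb i)
  · exact add_mem (smul_mem _ _ (hb i)) (hb _)

/-- Chain `i` consists of the vectors `(f - eigenvalue i) ^ j (top i)` for `j < length i`; the last
of them is an eigenvector. -/
structure JordanChains (f : End K V) (ι : Type*) where
  eigenvalue : ι → K
  top : ι → V
  length : ι → ℕ
  length_pos (i : ι) : 0 < length i
  pow_length_apply_top (i : ι) :
    ((f - algebraMap K (End K V) (eigenvalue i)) ^ length i) (top i) = 0

namespace JordanChains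

variable {f : End K V} {ι : Type*} (c : JordanChains f ι)

def vec (p : Σ i, Fin (c.length i)) : V :=
  ((f - algebraMap K (End K V) (c.eigenvalue p.1)) ^ (p.2 : ℕ)) (c.top p.1)

theorem pow_apply_top_mem_span (i : ι) (j : ℕ) :
    ((f - algebraMap K (End K V) (c.eigenvalue i)) ^ j) (c.top i) ∈ span K (range c.vec) := by
  rcases lt_or_ge j (c.length i) with hj | hj
  · exact subset_span ⟨⟨i, j, hj⟩, rfl⟩
  · rw [← Nat.sub_add_cancel hj, pow_add, mul_apply, c.pow_length_apply_top, map_zero]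
    exact zero_mem _

theorem vec_mem {W : Submodule K V} (hW : ∀ v ∈ W, f v ∈ W) (hc : ∀ i, c.top i ∈ W)
    (p : Σ i, Fin (c.length i)) : c.vec p ∈ W :=
  pow_sub_algebraMap_apply_mem hW _ _ (hc p.1)

theorem apply_vec (i : ι) (j : Fin (c.length i)) :
    f (c.vec ⟨i, j⟩) = c.eigenvalue i • c.vec ⟨i, j⟩ +
      if h : (j : ℕ) + 1 < c.length i then c.vec ⟨i, ⟨j + 1, h⟩⟩ else 0 := by
  have hN : f (c.vec ⟨i, j⟩) = c.eigenvalue i • c.vec ⟨i, j⟩ +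
      ((f - algebraMap K (End K V) (c.eigenvalue i)) ^ ((j : ℕ) + 1)) (c.top i) := by
    rw [pow_succ', mul_apply, LinearMap.sub_apply, algebraMap_end_apply, vec, add_sub_cancel]
  rw [hN]
  split_ifs with h
  · rfl
  · rw [show (j : ℕ) + 1 = c.length i by omega, c.pow_length_apply_top]

theorem exists_isJordanSeq [Fintype ι] :
    ∃ (N : ℕ) (σ : Fin N ≃ Σ i, Fin (c.length i)) (lam : Fin N → K),
      IsJordanSeq f (c.vec ∘ σ) lam := by
  let e := (Fintype.equivFin ι).symm
  -- chain after chain, each read from its eigenvector up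
  let σ : Fin (∑ a, c.length (e a)) ≃ Σ i, Fin (c.length i) :=
    finSigmaFinEquiv.symm.trans
      ((Equiv.sigmaCongrRight fun a => Fin.revPerm).trans
        (Equiv.sigmaCongrLeft (β := fun i => Fin (c.length i)) e))
  have hσ (a) (j : Fin (c.length (e a))) : σ (finSigmaFinEquiv ⟨a, j⟩) = ⟨e a, j.rev⟩ := by
    simp [σ]
  refine ⟨_, σ, fun t => c.eigenvalue (σ t).1, fun t => ?_⟩
  obtain ⟨⟨a, j⟩, rfl⟩ := finSigmaFinEquiv.surjective t
  have hrev := Fin.val_rev j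
  simp only [Function.comp_apply, hσ, c.apply_vec]
  rcases Nat.eq_zero_or_pos j with hj | hj
  · left
    rw [dif_neg (by omega), add_zero]
  · right
    have hpos : 0 < (finSigmaFinEquiv ⟨a, j⟩ : Fin (∑ a, c.length (e a))).val := by
      simp only [finSigmaFinEquiv_apply]; omega
    have hpred : (⟨finSigmaFinEquiv (n := fun a => c.length (e a)) ⟨a, j⟩ - 1, by omega⟩ :
        Fin (∑ a, c.length (e a))) =
        finSigmaFinEquiv (n := fun a => c.length (e a)) ⟨a, ⟨j - 1, by omega⟩⟩ :=
      Fin.ext (by simp only [finSigmaFinEquiv_apply]; omega)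
    refine ⟨hpos, ?_, ?_⟩
    · rw [hpred, hσ, dif_pos (by omega)]
      congr 3
      ext
      simp only [Fin.val_rev]
      omega
    · rw [hpred, hσ]

theorem natCard_eigenvalue_eq_le_finrank [FiniteDimensional K V] [Fintype ι]
    (hc : LinearIndependent K c.vec) (μ : K) :
    Nat.card {i // c.eigenvalue i = μ} ≤
      finrank K ↥(span K (range c.vec) ⊓ LinearMap.ker (f - algebraMap K (End K V) μ)) := by
  classical
  let bottom (i : {i // c.eigenvalue i = μ}) : Σ i, Fin (c.length i) :=
    ⟨i, c.length i - 1, Nat.sub_lt (c.length_pos i) one_pos⟩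
  have hbottom : Function.Injective bottom := fun i i' h => Subtype.ext (congrArg Sigma.fst h)
  rw [Nat.card_eq_fintype_card, ← finrank_span_eq_card (hc.comp bottom hbottom)]
  apply Submodule.finrank_mono
  rw [span_le, range_subset_iff]
  intro i
  refine mem_inf.2 ⟨subset_span (mem_range_self _), ?_⟩
  have h := c.pow_length_apply_top i
  rw [← Nat.sub_add_cancel (show 1 ≤ c.length i from c.length_pos i), pow_succ', mul_apply] at h
  rwa [LinearMap.mem_ker, Function.comp_apply, vec, ← i.2]

section extend

open scoped Classical

variable {κ : Type*} (μ : K) (y : ι → V)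
  (hy : ∀ i, c.eigenvalue i = μ → (f - algebraMap K (End K V) μ) (y i) = c.top i)
  (z : κ → V) (hz : ∀ j, (f - algebraMap K (End K V) μ) (z j) = 0)

noncomputable def extend : JordanChains f (ι ⊕ κ) where
  eigenvalue := Sum.elim c.eigenvalue fun _ => μ
  top := Sum.elim (fun i => if c.eigenvalue i = μ then y i else c.top i) z
  length := Sum.elim (fun i => if c.eigenvalue i = μ then c.length i + 1 else c.length i) 1
  length_pos p := by
    rcases p with i | j
    · have := c.length_pos i
      dsimp only [Sum.elim_inl]
      split_ifs <;> omega
    · exact one_pos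
  pow_length_apply_top p := by
    rcases p with i | j
    · dsimp only [Sum.elim_inl]
      split_ifs with h
      · rw [pow_succ, mul_apply, h, hy i h, ← h, c.pow_length_apply_top]
      · exact c.pow_length_apply_top i
    · simpa using hz j

theorem span_le_span_extend :
    span K (range c.vec) ≤ span K (range (c.extend μ y hy z hz).vec) := by
  refine span_le.2 (range_subset_iff.2 fun ⟨i, j⟩ => ?_)
  have key := (c.extend μ y hy z hz).pow_apply_top_mem_span (Sum.inl i)
  by_cases h : c.eigenvalue i = μ
  · simpa [extend, h, vec, pow_succ, hy i h] using key (j + 1)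
  · simpa [extend, h, vec] using key j

theorem span_le_map_span_extend :
    span K (range c.vec) ≤
      (span K (range (c.extend μ y hy z hz).vec)).map (f - algebraMap K (End K V) μ) := by
  refine span_le.2 (range_subset_iff.2 fun ⟨i, j⟩ => ?_)
  by_cases h : c.eigenvalue i = μ
  · subst h
    refine ⟨_, (c.extend _ y hy z hz).pow_apply_top_mem_span (Sum.inl i) j, ?_⟩
    change (f - algebraMap K (End K V) (c.eigenvalue i))
      (((f - algebraMap K (End K V) (c.eigenvalue i)) ^ (j : ℕ))
        (if c.eigenvalue i = c.eigenvalue i then y i else c.top i)) = c.vec ⟨i, j⟩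
    rw [if_pos rfl, ← mul_apply, ← pow_succ', pow_succ, mul_apply, hy i rfl, vec]
  · refine map_mono (c.span_le_span_extend μ y hy z hz)
      (mem_map_sub_algebraMap_of_pow_apply_eq_zero h (m := c.length i) ?_ fun l => ?_)
    · rw [vec, ← mul_apply, ← pow_add, add_comm, pow_add, mul_apply, c.pow_length_apply_top,
        map_zero]
    · rw [vec, ← mul_apply, ← pow_add]
      exact c.pow_apply_top_mem_span i _

theorem natCard_sigma_extend [Fintype ι] [Fintype κ] :
    Nat.card (Σ p, Fin ((c.extend μ y hy z hz).length p)) =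
      Nat.card (Σ i, Fin (c.length i)) + Nat.card {i // c.eigenvalue i = μ} + Nat.card κ := by
  classical
  rw [Nat.card_sigma, Nat.card_sigma, Fintype.sum_sum_type, Nat.card_eq_fintype_card (α := κ),
    Nat.card_eq_fintype_card (α := {i // _}), Fintype.card_subtype, Finset.card_filter,
    ← Finset.sum_add_distrib]
  simp only [Nat.card_fin]
  congr 1
  · exact Finset.sum_congr rfl fun i _ => by simp only [extend, Sum.elim_inl]; split_ifs <;> rfl
  · simp [extend]

end extend

end JordanChains

theorem JordanChains.exists_of_span_eq_map [FiniteDimensional K V] {f : End K V} {ι : Type}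
    [Fintype ι] (c : JordanChains f ι) {W : Submodule K V} (hW : ∀ v ∈ W, f v ∈ W) {μ : K}
    (hc : LinearIndependent K c.vec)
    (hcW : span K (range c.vec) = W.map (f - algebraMap K (End K V) μ)) :
    ∃ (κ : Type) (_ : Fintype κ) (d : JordanChains f κ),
      LinearIndependent K d.vec ∧ span K (range d.vec) = W := by
  set g := f - algebraMap K (End K V) μ
  have hUW : W.map g ≤ W := by
    rintro _ ⟨w, hw, rfl⟩
    simpa only [pow_one] using pow_sub_algebraMap_apply_mem hW μ 1 hw
  have htop (i : ι) : ∃ y ∈ W, g y = c.top i := by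
    rw [← mem_map, ← hcW]
    simpa [vec] using c.pow_apply_top_mem_span i 0
  choose y hyW hy using htop
  obtain ⟨C, hCK, hsup, hdim⟩ := exists_le_sup_eq_and_finrank_add_eq
    (inf_le_inf_right (LinearMap.ker g) hUW)
  let z (j : Fin (finrank K C)) : V := finBasis K C j
  have hz (j : Fin (finrank K C)) : g (z j) = 0 := (mem_inf.1 (hCK (finBasis K C j).2)).2
  have hCz : span K (range z) = C := by
    rw [show range z = C.subtype '' range (finBasis K C) from range_comp _ _, ← map_span,
      (finBasis K C).span_eq, map_subtype_top]
  let d := c.extend μ y (fun i _ => hy i) z hz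
  have hspan : span K (range d.vec) = W := by
    refine eq_of_le_of_map_le_of_inf_ker_le g ?_ ?_ ?_
    · refine span_le.2 (range_subset_iff.2 (d.vec_mem hW fun p => ?_))
      rcases p with i | j
      · by_cases h : c.eigenvalue i = μ
        · simpa [d, extend, h] using hyW i
        · simpa [d, extend, h] using hUW (hcW ▸ c.pow_apply_top_mem_span i 0)
      · exact (mem_inf.1 (hCK (finBasis K C j).2)).1
    · exact hcW ▸ c.span_le_map_span_extend μ y _ z hz
    · refine hsup.ge.trans (sup_le (inf_le_left.trans (hcW ▸ c.span_le_span_extend μ y _ z hz))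
        (hCz.ge.trans (span_le.2 ?_)))
      rintro _ ⟨j, rfl⟩
      simpa [d, extend, vec] using d.pow_apply_top_mem_span (Sum.inr j) 0
  refine ⟨_, inferInstance, d, linearIndependent_of_span_eq_of_card_le hspan ?_, hspan⟩
  have hcard : Nat.card (Σ p, Fin (d.length p)) = Nat.card (Σ i, Fin (c.length i)) +
      Nat.card {i // c.eigenvalue i = μ} + Nat.card (Fin (finrank K C)) :=
    c.natCard_sigma_extend μ y _ z hz
  have hcU := finrank_span_eq_card hc
  have hbottom : Nat.card {i // c.eigenvalue i = μ} ≤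
      finrank K ↥(span K (range c.vec) ⊓ LinearMap.ker g) :=
    c.natCard_eigenvalue_eq_le_finrank hc μ
  have hrank := finrank_map_add_finrank_inf_ker g W
  rw [hcW] at hcU hbottom
  simp only [Nat.card_eq_fintype_card, Fintype.card_fin] at hcard
  omega

theorem exists_jordanChains [IsAlgClosed K] [FiniteDimensional K V] (f : End K V)
    (W : Submodule K V) (hW : ∀ v ∈ W, f v ∈ W) :
    ∃ (ι : Type) (_ : Fintype ι) (c : JordanChains f ι),
      LinearIndependent K c.vec ∧ span K (range c.vec) = W := by
  induction hd : finrank K W using Nat.strong_induction_on generalizing W with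
  | _ d IH =>
  rcases eq_or_ne W ⊥ with rfl | hW0
  · refine ⟨Empty, inferInstance, ⟨Empty.elim, Empty.elim, Empty.elim, (·.elim), (·.elim)⟩,
      linearIndependent_empty_type, ?_⟩
    simp
  obtain ⟨μ, v, hvW, hv0, hfv⟩ := exists_eigenvector_mem hW hW0
  have hpos : 0 < finrank K ↥(W ⊓ LinearMap.ker (f - algebraMap K (End K V) μ)) := by
    refine one_le_finrank_iff.2 (Submodule.ne_bot_iff _ |>.2 ⟨v, mem_inf.2 ⟨hvW, ?_⟩, hv0⟩)
    simp [hfv]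
  have hlt := finrank_map_add_finrank_inf_ker (f - algebraMap K (End K V) μ) W
  obtain ⟨ι, _, c, hc, hcU⟩ :=
    IH _ (by omega) (W.map _) (apply_mem_map_sub_algebraMap hW μ) rfl
  exact c.exists_of_span_eq_map hW hc hcU

end Module.End

theorem invariant_subspace_iff_jordan_vectors_basis
    (n k : ℕ) (hk : 1 ≤ k)
    (M : Matrix (Fin n) (Fin n) ℂ)
    (W : Submodule ℂ (Fin n → ℂ)) (hW : Module.finrank ℂ W = k) :
    (∀ v ∈ W, M.mulVec v ∈ W) ↔
    (∃ (b : Fin k → (Fin n → ℂ)) (lam : Fin k → ℂ),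
      LinearIndependent ℂ b ∧
      Submodule.span ℂ (Set.range b) = W ∧
      M.mulVec (b ⟨0, by omega⟩) = lam ⟨0, by omega⟩ • b ⟨0, by omega⟩ ∧
      ∀ i : Fin k, 0 < i.val →
        (M.mulVec (b i) = lam i • b i ∨
          (M.mulVec (b i) = lam i • b i + b ⟨i.val - 1, by omega⟩ ∧
            lam i = lam ⟨i.val - 1, by omega⟩))) := by
  constructor
  · intro hinv
    obtain ⟨ι, _, c, hc, hcW⟩ := Module.End.exists_jordanChains M.mulVecLin W hinv
    obtain ⟨N, σ, lam, hseq⟩ := c.exists_isJordanSeq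
    have hrange : range (c.vec ∘ σ) = range c.vec := σ.surjective.range_comp _
    have hN : N = k := by
      rw [← hW, ← hcW, ← hrange, finrank_span_eq_card (hc.comp σ σ.injective), Fintype.card_fin]
    subst hN
    refine ⟨c.vec ∘ σ, lam, hc.comp σ σ.injective, hrange ▸ hcW, ?_, fun i _ => ?_⟩
    · exact (hseq _).resolve_right fun h => lt_irrefl 0 h.1
    · exact (hseq i).imp_right And.right
  · rintro ⟨b, lam, -, rfl, h0, hsucc⟩ v hv
    refine Module.End.IsJordanSeq.apply_mem_span (f := M.mulVecLin) (lam := lam) (fun i => ?_) hv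
    rcases Nat.eq_zero_or_pos i with hi | hi
    · rw [show i = ⟨0, by omega⟩ from Fin.ext hi]
      exact Or.inl h0
    · exact (hsucc i hi).imp id fun h => ⟨hi, h⟩
end

section
/- Let τ > 0 and ω > 0 be real numbers. Then (I·ω)² − (I·ω)·(1 + Complex.exp(−τ·(I·ω))) + 1 = 0 if and only if ω = 1 and there exists a natural number k with τ = (2·k + 1)·π. In other words, the characteristic function s² − s(1 + e^{−τs}) + 1 of the subsystem ż = Ā₁₁ z(t) + B̄₁₁ z(t − τ) has a root on the open upper imaginary axis exactly at the crossing frequency ω = 1, with corresponding delays τ = π, 3π, 5π, …. -/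
/-!
Writing `s = iω` and `e^{-iτω} = cos(τω) - i sin(τω)`, the characteristic function at `iω` has
real part `1 - ω² - ω sin(τω)` and imaginary part `-ω (1 + cos(τω))`. For `ω > 0` the imaginary
part vanishes only when `cos(τω) = -1`, which forces `sin(τω) = 0`, and then the real part
vanishes only when `ω = 1`. Finally, the positive solutions of `cos τ = -1` are the odd multiples
of `π`.
-/

open Complex

theorem Real.cos_eq_neg_one_iff_of_pos {x : ℝ} (hx : 0 < x) :
    Real.cos x = -1 ↔ ∃ k : ℕ, x = (2 * k + 1) * Real.pi := by
  rw [Real.cos_eq_neg_one_iff]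
  constructor
  · rintro ⟨k, rfl⟩
    have hk : (-1 : ℝ) < 2 * k := by nlinarith [Real.pi_pos]
    lift k to ℕ using by exact_mod_cast (show (-1 : ℝ) < k by linarith)
    exact ⟨k, by push_cast; ring⟩
  · rintro ⟨k, rfl⟩
    exact ⟨k, by push_cast; ring⟩

theorem Complex.exp_neg_ofReal_mul_I_mul (τ ω : ℝ) :
    exp (-(τ : ℂ) * (I * ω)) = Real.cos (τ * ω) - Real.sin (τ * ω) * I := by
  rw [show -(τ : ℂ) * (I * ω) = ((-(τ * ω) : ℝ) : ℂ) * I by push_cast; ring, exp_mul_I]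
  push_cast
  rw [cos_neg, sin_neg]
  ring

namespace Subsystem5

/-- `det(sI - Ā₁₁ - B̄₁₁ e^{-τs})` for the subsystem (5). -/
noncomputable def charFun (τ : ℝ) (s : ℂ) : ℂ :=
  s ^ 2 - s * (1 + exp (-(τ : ℂ) * s)) + 1

theorem charFun_I_mul_re (τ ω : ℝ) :
    (charFun τ (I * ω)).re = 1 - ω ^ 2 - ω * Real.sin (τ * ω) := by
  rw [charFun, exp_neg_ofReal_mul_I_mul]
  simp only [sub_re, sub_im, add_re, add_im, mul_re, mul_im, pow_two, I_re, I_im, ofReal_re,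
    ofReal_im, one_re, one_im]
  ring

theorem charFun_I_mul_im (τ ω : ℝ) :
    (charFun τ (I * ω)).im = -ω * (1 + Real.cos (τ * ω)) := by
  rw [charFun, exp_neg_ofReal_mul_I_mul]
  simp only [sub_re, sub_im, add_re, add_im, mul_re, mul_im, pow_two, I_re, I_im, ofReal_re,
    ofReal_im, one_re, one_im]
  ring

theorem charFun_I_mul_eq_zero_iff (τ : ℝ) {ω : ℝ} (hω : 0 < ω) :
    charFun τ (I * ω) = 0 ↔ ω = 1 ∧ Real.cos (τ * ω) = -1 := by
  rw [Complex.ext_iff, charFun_I_mul_re, charFun_I_mul_im, zero_re, zero_im]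
  constructor
  · rintro ⟨hre, him⟩
    have hcos : Real.cos (τ * ω) = -1 := by
      have := (mul_eq_zero.1 him).resolve_left (neg_ne_zero.2 hω.ne')
      linarith
    have hsin : Real.sin (τ * ω) = 0 := Real.sin_eq_zero_iff_cos_eq.2 (Or.inr hcos)
    rw [hsin, mul_zero, sub_zero, sub_eq_zero, eq_comm,
      pow_eq_one_iff_of_nonneg hω.le two_ne_zero] at hre
    exact ⟨hre, hcos⟩
  · rintro ⟨rfl, hcos⟩
    rw [Real.sin_eq_zero_iff_cos_eq.2 (Or.inr hcos), hcos]
    norm_num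

end Subsystem5

theorem subsystem5_crossing_frequencies
    (τ ω : ℝ) (hτ : 0 < τ) (hω : 0 < ω) :
    ((Complex.I * ω) ^ 2
        - (Complex.I * ω) * (1 + Complex.exp (-(τ : ℂ) * (Complex.I * ω))) + 1 = 0) ↔
    (ω = 1 ∧ ∃ k : ℕ, τ = (2 * k + 1) * Real.pi) := by
  change Subsystem5.charFun τ (I * ω) = 0 ↔ _
  rw [Subsystem5.charFun_I_mul_eq_zero_iff τ hω]
  refine and_congr_right fun hω₁ => ?_
  rw [hω₁, mul_one, Real.cos_eq_neg_one_iff_of_pos hτ]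
end

section
/- Let τ > 0 and ω > 0 be real numbers. Then (I·ω)² + 2 + Complex.exp(−τ·(I·ω)) = 0 if and only if either (ω = Real.sqrt 3 and there exists a positive natural number k with τ = 2·k·π / Real.sqrt 3) or (ω = 1 and there exists a natural number k with τ = (2·k + 1)·π). In other words, the characteristic function s² + 2 + e^{−τs} of the subsystem ż = Ā₂₂ z(t) + B̄₂₂ z(t − τ) has roots on the open upper imaginary axis exactly at the crossing frequencies ω = √3 (delays τ = 2kπ/√3) and ω = 1 (delays τ = π + 2kπ). -/
/-! On the imaginary axis the characteristic equation splits into `cos (τω) = ω² - 2` and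
`sin (τω) = 0`. The latter forces `cos (τω) = ±1`, so either `ω² = 3` and `τω` is a positive
multiple of `2π`, or `ω² = 1` and `τω` is an odd multiple of `π`. -/

open Real

theorem Real.cos_eq_one_iff_of_pos {θ : ℝ} (hθ : 0 < θ) :
    cos θ = 1 ↔ ∃ k : ℕ, 0 < k ∧ θ = 2 * k * π := by
  rw [cos_eq_one_iff]
  constructor
  · rintro ⟨n, rfl⟩
    have hn : (0 : ℝ) < n := pos_of_mul_pos_left hθ (by positivity)
    lift n to ℕ using (Int.cast_pos.mp hn).le
    exact ⟨n, by exact_mod_cast hn, by push_cast; ring⟩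
  · rintro ⟨k, -, rfl⟩
    exact ⟨k, by push_cast; ring⟩

theorem Real.cos_eq_neg_one_iff_of_nonneg {θ : ℝ} (hθ : 0 ≤ θ) :
    cos θ = -1 ↔ ∃ k : ℕ, θ = (2 * k + 1) * π := by
  rw [cos_eq_neg_one_iff]
  constructor
  · rintro ⟨n, rfl⟩
    have hn : (-1 : ℝ) < n := by nlinarith [pi_pos]
    lift n to ℕ using by exact_mod_cast hn
    exact ⟨n, by push_cast; ring⟩
  · rintro ⟨k, rfl⟩
    exact ⟨k, by push_cast; ring⟩

theorem Real.cos_eq_and_sin_eq_zero_iff (c θ : ℝ) :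
    cos θ = c ∧ sin θ = 0 ↔ (c = 1 ∧ cos θ = 1) ∨ (c = -1 ∧ cos θ = -1) := by
  rw [sin_eq_zero_iff_cos_eq]
  grind

theorem Complex.ofReal_add_exp_neg_mul_I_eq_zero_iff (a θ : ℝ) :
    (a : ℂ) + exp (-θ * I) = 0 ↔ Real.cos θ = -a ∧ Real.sin θ = 0 := by
  rw [← ofReal_neg, exp_mul_I, ← ofReal_cos, ← ofReal_sin, Real.cos_neg, Real.sin_neg,
    Complex.ext_iff]
  simp only [add_re, add_im, ofReal_re, ofReal_im, mul_re, mul_im, I_re, I_im, zero_re, zero_im]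
  constructor <;> rintro ⟨h₁, h₂⟩ <;> constructor <;> linarith

theorem char_subsystem6_eq_zero_iff (τ ω : ℝ) :
    (Complex.I * ω) ^ 2 + 2 + Complex.exp (-(τ : ℂ) * (Complex.I * ω)) = 0 ↔
      cos (τ * ω) = ω ^ 2 - 2 ∧ sin (τ * ω) = 0 := by
  have h : (Complex.I * ω) ^ 2 + 2 + Complex.exp (-(τ : ℂ) * (Complex.I * ω)) =
      ((2 - ω ^ 2 : ℝ) : ℂ) + Complex.exp (-((τ * ω : ℝ) : ℂ) * Complex.I) := by
    push_cast
    ring_nf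
    rw [Complex.I_sq]
    ring
  rw [h, Complex.ofReal_add_exp_neg_mul_I_eq_zero_iff, neg_sub]

theorem subsystem6_crossing_frequencies
    (τ ω : ℝ) (hτ : 0 < τ) (hω : 0 < ω) :
    ((Complex.I * ω) ^ 2 + 2 + Complex.exp (-(τ : ℂ) * (Complex.I * ω)) = 0) ↔
    ((ω = Real.sqrt 3 ∧ ∃ k : ℕ, 0 < k ∧ τ = 2 * k * Real.pi / Real.sqrt 3) ∨
      (ω = 1 ∧ ∃ k : ℕ, τ = (2 * k + 1) * Real.pi)) := by
  have hω₃ : ω ^ 2 - 2 = 1 ↔ ω = √3 := by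
    rw [eq_comm (a := ω), sqrt_eq_iff_eq_sq (by norm_num) hω.le]
    constructor <;> intro h <;> linarith
  have hω₁ : ω ^ 2 - 2 = -1 ↔ ω = 1 := by
    constructor
    · intro h; nlinarith
    · rintro rfl; norm_num
  rw [char_subsystem6_eq_zero_iff, cos_eq_and_sin_eq_zero_iff, hω₃, hω₁,
    cos_eq_one_iff_of_pos (by positivity), cos_eq_neg_one_iff_of_nonneg (by positivity)]
  refine or_congr (and_congr_right ?_) (and_congr_right ?_) <;> rintro rfl
  · simp_rw [eq_div_iff (sqrt_ne_zero'.mpr three_pos)]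
  · simp_rw [mul_one]
end

section
/- Let τ and ω be real numbers with ω > 0. If (I·ω)³ − (I·ω)² + 2·(I·ω) − 1 + (I·ω)·Complex.exp(−τ·(I·ω)) = 0, then ω = 1 or ω = Real.sqrt (1 + Real.sqrt 2). That is, the only possible crossing frequencies of the characteristic function s³ − s² + 2s − 1 + s·e^{−τs} of the three-dimensional subsystem are ω = 1 and ω = √(1 + √2). -/
/-!
At `s = iω` the delay factor `e^{-τs}` has modulus one, so a root forces `|P(iω)| = ω` for the
delay-free part `P(s) = s³ - s² + 2s - 1`. Since `P(iω) = (ω² - 1) + i(2ω - ω³)`, squaring gives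
`(ω² - 1)(ω⁴ - 2ω² - 1) = 0`, whose positive roots are `1` and `√(1 + √2)`.
-/

open Complex

theorem norm_eq_of_add_mul_exp_neg_mul_I_eq_zero (a b : ℂ) (τ ω : ℝ)
    (h : a + b * exp (-(τ : ℂ) * (I * ω)) = 0) : ‖a‖ = ‖b‖ := by
  have hexp : ‖exp (-(τ : ℂ) * (I * ω))‖ = 1 := by
    rw [show -(τ : ℂ) * (I * ω) = ((-(τ * ω) : ℝ) : ℂ) * I by push_cast; ring]
    exact norm_exp_ofReal_mul_I _
  rw [eq_neg_of_add_eq_zero_left h, norm_neg, norm_mul, hexp, mul_one]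

theorem delayFreePart_I_mul_eq (ω : ℝ) :
    (I * ω) ^ 3 - (I * ω) ^ 2 + 2 * (I * ω) - 1
      = ((ω ^ 2 - 1 : ℝ) : ℂ) + ((2 * ω - ω ^ 3 : ℝ) : ℂ) * I := by
  push_cast
  ring_nf
  rw [I_sq, I_pow_three]
  ring

theorem sq_sub_one_mul_eq_zero_of_sq_add_sq_eq (ω : ℝ)
    (h : (ω ^ 2 - 1) ^ 2 + (2 * ω - ω ^ 3) ^ 2 = ω ^ 2) :
    (ω ^ 2 - 1) * (ω ^ 4 - 2 * ω ^ 2 - 1) = 0 := by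
  linear_combination h

theorem eq_sqrt_one_add_sqrt_two_of_quartic_eq_zero {ω : ℝ} (hω : 0 ≤ ω)
    (h : ω ^ 4 - 2 * ω ^ 2 - 1 = 0) : ω = Real.sqrt (1 + Real.sqrt 2) := by
  have hsqrt2 : Real.sqrt 2 ^ 2 = 2 := Real.sq_sqrt zero_le_two
  have hsqrt2_gt : 1 < Real.sqrt 2 := by
    rw [show (1 : ℝ) = Real.sqrt 1 by simp]
    exact Real.sqrt_lt_sqrt zero_le_one one_lt_two
  have hfactor : (ω ^ 2 - (1 + Real.sqrt 2)) * (ω ^ 2 - (1 - Real.sqrt 2)) = 0 := by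
    linear_combination h - hsqrt2
  have hsq : ω ^ 2 = 1 + Real.sqrt 2 := by
    rcases mul_eq_zero.mp hfactor with h' | h'
    · linarith
    · nlinarith [sq_nonneg ω]
  rw [← hsq, Real.sqrt_sq hω]

theorem subsystem9_possible_crossing_frequencies
    (τ ω : ℝ) (hω : 0 < ω)
    (h : (Complex.I * ω) ^ 3 - (Complex.I * ω) ^ 2 + 2 * (Complex.I * ω) - 1
        + (Complex.I * ω) * Complex.exp (-(τ : ℂ) * (Complex.I * ω)) = 0) :
    ω = 1 ∨ ω = Real.sqrt (1 + Real.sqrt 2) := by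
  have hnorm := norm_eq_of_add_mul_exp_neg_mul_I_eq_zero _ _ τ ω h
  have hsq : (ω ^ 2 - 1) ^ 2 + (2 * ω - ω ^ 3) ^ 2 = ω ^ 2 := by
    have := congrArg (· ^ 2) hnorm
    simpa only [← normSq_eq_norm_sq, delayFreePart_I_mul_eq, normSq_add_mul_I, norm_mul, norm_I,
      norm_real, Real.norm_eq_abs, one_mul, sq_abs] using this
  rcases mul_eq_zero.mp (sq_sub_one_mul_eq_zero_of_sq_add_sq_eq ω hsq) with h1 | h2
  · left
    nlinarith
  · exact Or.inr (eq_sqrt_one_add_sqrt_two_of_quartic_eq_zero hω.le h2)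
end
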